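/- FOOBAR guarantee under an imperfect forward run. Let πf be any policy, let f_h : S × A → ℝ for h ∈ {1,…,H}, and let πb be a deterministic policy that is greedy with respect to f, i.e. f_h(s, πb_h(s)) = max_a f_h(s,a) for every h and s. Let ε_b, C ≥ 0. Assume: (i) value-estimation error: for every h, ∑_s d^{πf}_h(s) · max_a (f_h(s,a) − Q^{πb}_h(s,a))² ≤ ε_b²; (ii) coverage by the forward policy: for a comparator policy πcomp, d^{πcomp}_h(s) ≤ C · d^{πf}_h(s) for every h and s. Then V^{πcomp} − V^{πb} ≤ 2 · C · H · ε_b. -/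
import Mathlib


open Finset

/-- Occupancy measure of a (non-stationary) policy in a finite-horizon MDP:
`docc P0 Ptr π h` is `d^π_h`, with `d^π_1 = P0` and
`d^π_{h+1}(s') = ∑_{s,a} d^π_h(s) π_h(a|s) P_h(s'|s,a)`.  The value at index `0` is a dummy. -/
noncomputable def docc {S A : Type*} [Fintype S] [Fintype A] (P0 : S → ℝ)
    (Ptr : ℕ → S → A → S → ℝ) (π : ℕ → S → A → ℝ) : ℕ → S → ℝ
  | 0 => P0
  | 1 => P0
  | h + 2 => fun s' =>
      ∑ s : S, ∑ a : A, docc P0 Ptr π (h + 1) s * π (h + 1) s a * Ptr (h + 1) s a s'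

/-- Backward value recursion: `Wval H Ptr R π k = V^π_{H+1-k}`, so `Wval H Ptr R π 0 = V^π_{H+1} = 0`. -/
noncomputable def Wval {S A : Type*} [Fintype S] [Fintype A] (H : ℕ)
    (Ptr : ℕ → S → A → S → ℝ) (R : ℕ → S → A → ℝ) (π : ℕ → S → A → ℝ) : ℕ → S → ℝ
  | 0 => fun _ => 0
  | k + 1 => fun s => ∑ a : A, π (H - k) s a *
      (R (H - k) s a + ∑ s' : S, Ptr (H - k) s a s' * Wval H Ptr R π k s')

/-- State value function `V^π_h`. -/
noncomputable def Vval {S A : Type*} [Fintype S] [Fintype A] (H : ℕ)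
    (Ptr : ℕ → S → A → S → ℝ) (R : ℕ → S → A → ℝ) (π : ℕ → S → A → ℝ) (h : ℕ) : S → ℝ :=
  Wval H Ptr R π (H + 1 - h)

/-- Action value function `Q^π_h(s,a) = R_h(s,a) + ∑_{s'} P_h(s'|s,a) V^π_{h+1}(s')`. -/
noncomputable def Qval {S A : Type*} [Fintype S] [Fintype A] (H : ℕ)
    (Ptr : ℕ → S → A → S → ℝ) (R : ℕ → S → A → ℝ) (π : ℕ → S → A → ℝ)
    (h : ℕ) (s : S) (a : A) : ℝ :=
  R h s a + ∑ s' : S, Ptr h s a s' * Vval H Ptr R π (h + 1) s'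

/-- Total value `V^π = ∑_s P0(s) V^π_1(s)`. -/
noncomputable def Vtot {S A : Type*} [Fintype S] [Fintype A] (H : ℕ) (P0 : S → ℝ)
    (Ptr : ℕ → S → A → S → ℝ) (R : ℕ → S → A → ℝ) (π : ℕ → S → A → ℝ) : ℝ :=
  ∑ s : S, P0 s * Vval H Ptr R π 1 s

/-- The stochastic policy (point mass) induced by a deterministic policy `d : ℕ → S → A`. -/
noncomputable def detPol {S A : Type*} [DecidableEq A] (d : ℕ → S → A) : ℕ → S → A → ℝ :=
  fun h s a => if a = d h s then 1 else 0

/-- Maximum of a real-valued function over the finite nonempty type `A`. -/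
noncomputable def maxA {A : Type*} [Fintype A] [Nonempty A] (g : A → ℝ) : ℝ :=
  Finset.univ.sup' Finset.univ_nonempty g

section Helpers

variable {S A : Type*} [Fintype S] [Fintype A]

lemma Vval_top (H : ℕ) (Ptr : ℕ → S → A → S → ℝ) (R : ℕ → S → A → ℝ)
    (π : ℕ → S → A → ℝ) (s : S) : Vval H Ptr R π (H + 1) s = 0 := by
  simp [Vval, Nat.sub_self, Wval]

lemma Vval_bellman (H : ℕ) (Ptr : ℕ → S → A → S → ℝ) (R : ℕ → S → A → ℝ)
    (π : ℕ → S → A → ℝ) (h : ℕ) (hh : h ≤ H) (s : S) :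
    Vval H Ptr R π h s = ∑ a : A, π h s a * Qval H Ptr R π h s a := by
  have e1 : H + 1 - h = (H - h) + 1 := by omega
  have e2 : H - (H - h) = h := by omega
  have e3 : H + 1 - (h + 1) = H - h := by omega
  simp only [Vval, Qval, e1, e3, Wval, e2]

lemma docc_succ (P0 : S → ℝ) (Ptr : ℕ → S → A → S → ℝ) (π : ℕ → S → A → ℝ)
    (h : ℕ) (hh : 1 ≤ h) (s' : S) :
    docc P0 Ptr π (h + 1) s' =
      ∑ s : S, ∑ a : A, docc P0 Ptr π h s * π h s a * Ptr h s a s' := by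
  obtain ⟨k, rfl⟩ : ∃ k, h = k + 1 := ⟨h - 1, by omega⟩
  rfl

lemma docc_prop (H : ℕ) (P0 : S → ℝ) (hP0 : ∀ s, 0 ≤ P0 s) (hP0sum : ∑ s : S, P0 s = 1)
    (Ptr : ℕ → S → A → S → ℝ)
    (hPtr0 : ∀ h ∈ Finset.Icc 1 H, ∀ s a s', 0 ≤ Ptr h s a s')
    (hPtr1 : ∀ h ∈ Finset.Icc 1 H, ∀ s a, ∑ s' : S, Ptr h s a s' = 1)
    (π : ℕ → S → A → ℝ)
    (hπ0 : ∀ h ∈ Finset.Icc 1 H, ∀ s a, 0 ≤ π h s a)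
    (hπ1 : ∀ h ∈ Finset.Icc 1 H, ∀ s, ∑ a : A, π h s a = 1) :
    ∀ h, 1 ≤ h → h ≤ H + 1 →
      (∀ s, 0 ≤ docc P0 Ptr π h s) ∧ ∑ s : S, docc P0 Ptr π h s = 1 := by
  intro h
  induction h with
  | zero => omega
  | succ n ih =>
    intro _ hle
    by_cases hn : n = 0
    · subst hn
      exact ⟨hP0, hP0sum⟩
    · have h1n : 1 ≤ n := by omega
      have hmem : n ∈ Finset.Icc 1 H := by simp only [Finset.mem_Icc]; omega
      obtain ⟨ih0, ih1⟩ := ih h1n (by omega)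
      refine ⟨fun s' => ?_, ?_⟩
      · rw [docc_succ P0 Ptr π n h1n]
        refine Finset.sum_nonneg fun s _ => Finset.sum_nonneg fun a _ => ?_
        exact mul_nonneg (mul_nonneg (ih0 s) (hπ0 n hmem s a)) (hPtr0 n hmem s a s')
      · simp only [docc_succ P0 Ptr π n h1n]
        rw [Finset.sum_comm]
        have : ∀ s : S, ∑ s' : S, ∑ a : A, docc P0 Ptr π n s * π n s a * Ptr n s a s'
            = docc P0 Ptr π n s := by
          intro s
          rw [Finset.sum_comm]
          calc ∑ a : A, ∑ s' : S, docc P0 Ptr π n s * π n s a * Ptr n s a s'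
              = ∑ a : A, docc P0 Ptr π n s * π n s a := by
                refine Finset.sum_congr rfl fun a _ => ?_
                rw [← Finset.mul_sum, hPtr1 n hmem s a, mul_one]
            _ = docc P0 Ptr π n s := by
                rw [← Finset.mul_sum, hπ1 n hmem s, mul_one]
        rw [Finset.sum_congr rfl fun s _ => this s, ih1]

lemma pdl_step (H : ℕ) (P0 : S → ℝ) (Ptr : ℕ → S → A → S → ℝ) (R : ℕ → S → A → ℝ)
    (π μ : ℕ → S → A → ℝ) (h : ℕ) (h1 : 1 ≤ h) (h2 : h ≤ H) :
    (∑ s : S, docc P0 Ptr π h s * (Vval H Ptr R π h s - Vval H Ptr R μ h s)) -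
    (∑ s' : S, docc P0 Ptr π (h+1) s' * (Vval H Ptr R π (h+1) s' - Vval H Ptr R μ (h+1) s')) =
    ∑ s : S, docc P0 Ptr π h s *
      ((∑ a : A, π h s a * Qval H Ptr R μ h s a) - Vval H Ptr R μ h s) := by
  have hQ : ∀ (s : S) (a : A),
      ∑ s' : S, Ptr h s a s' * (Vval H Ptr R π (h+1) s' - Vval H Ptr R μ (h+1) s')
        = Qval H Ptr R π h s a - Qval H Ptr R μ h s a := by
    intro s a
    simp only [Qval, mul_sub, Finset.sum_sub_distrib]
    ring
  have hsucc : ∑ s' : S, docc P0 Ptr π (h+1) s' *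
      (Vval H Ptr R π (h+1) s' - Vval H Ptr R μ (h+1) s')
      = ∑ s : S, ∑ a : A, docc P0 Ptr π h s * π h s a *
          (Qval H Ptr R π h s a - Qval H Ptr R μ h s a) := by
    calc ∑ s' : S, docc P0 Ptr π (h+1) s' *
          (Vval H Ptr R π (h+1) s' - Vval H Ptr R μ (h+1) s')
        = ∑ s' : S, ∑ s : S, ∑ a : A, docc P0 Ptr π h s * π h s a * Ptr h s a s' *
            (Vval H Ptr R π (h+1) s' - Vval H Ptr R μ (h+1) s') := by
          refine Finset.sum_congr rfl fun s' _ => ?_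
          rw [docc_succ P0 Ptr π h h1, Finset.sum_mul]
          exact Finset.sum_congr rfl fun s _ => by rw [Finset.sum_mul]
      _ = ∑ s : S, ∑ a : A, ∑ s' : S, docc P0 Ptr π h s * π h s a * Ptr h s a s' *
            (Vval H Ptr R π (h+1) s' - Vval H Ptr R μ (h+1) s') := by
          rw [Finset.sum_comm]
          exact Finset.sum_congr rfl fun s _ => Finset.sum_comm
      _ = ∑ s : S, ∑ a : A, docc P0 Ptr π h s * π h s a *
            (Qval H Ptr R π h s a - Qval H Ptr R μ h s a) := by
          refine Finset.sum_congr rfl fun s _ => Finset.sum_congr rfl fun a _ => ?_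
          rw [← hQ s a, Finset.mul_sum]
          exact Finset.sum_congr rfl fun s' _ => by ring
  rw [hsucc, ← Finset.sum_sub_distrib]
  refine Finset.sum_congr rfl fun s _ => ?_
  rw [Vval_bellman H Ptr R π h h2 s]
  simp only [mul_sub, Finset.mul_sum, ← Finset.sum_sub_distrib]
  rw [sub_sub, add_comm, ← sub_sub]
  congr 1
  rw [← Finset.sum_sub_distrib]
  refine Finset.sum_congr rfl fun a _ => ?_
  ring

lemma le_maxA {A : Type*} [Fintype A] [Nonempty A] (g : A → ℝ) (a : A) :
    g a ≤ maxA g := Finset.le_sup' g (Finset.mem_univ a)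

lemma convex_le_maxA {A : Type*} [Fintype A] [Nonempty A] (w g : A → ℝ)
    (hw0 : ∀ a, 0 ≤ w a) (hw1 : ∑ a : A, w a = 1) :
    ∑ a : A, w a * g a ≤ maxA g := by
  calc ∑ a : A, w a * g a ≤ ∑ a : A, w a * maxA g :=
        Finset.sum_le_sum fun a _ =>
          mul_le_mul_of_nonneg_left (le_maxA g a) (hw0 a)
    _ = maxA g := by rw [← Finset.sum_mul, hw1, one_mul]

lemma maxA_nonneg_sq {A : Type*} [Fintype A] [Nonempty A] (g : A → ℝ) :
    0 ≤ maxA (fun a => (g a) ^ 2) := by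
  obtain ⟨a⟩ := ‹Nonempty A›
  exact le_trans (sq_nonneg (g a)) (le_maxA (fun a => (g a) ^ 2) a)

lemma greedy_gap {A : Type*} [Fintype A] [Nonempty A] (g q : A → ℝ) (b : A)
    (hb : g b = maxA g) :
    maxA q ≤ q b + 2 * Real.sqrt (maxA (fun a => (g a - q a) ^ 2)) := by
  set G := maxA (fun a => (g a - q a) ^ 2) with hG
  have habs : ∀ a, |g a - q a| ≤ Real.sqrt G := by
    intro a
    rw [← Real.sqrt_sq_eq_abs]
    exact Real.sqrt_le_sqrt (le_maxA (fun a => (g a - q a) ^ 2) a)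
  obtain ⟨a0, -, ha0⟩ := Finset.exists_mem_eq_sup' (Finset.univ_nonempty (α := A)) q
  have h1 : q a0 - g a0 ≤ Real.sqrt G := le_trans (le_abs_self _) (by rw [abs_sub_comm]; exact habs a0)
  have h2 : g a0 ≤ g b := hb ▸ le_maxA g a0
  have h3 : g b - q b ≤ Real.sqrt G := le_trans (le_abs_self _) (habs b)
  have : maxA q = q a0 := ha0
  linarith

lemma cs_bound {S : Type*} [Fintype S] (d G : S → ℝ) (ε : ℝ)
    (hd0 : ∀ s, 0 ≤ d s) (hd1 : ∑ s : S, d s = 1) (hG0 : ∀ s, 0 ≤ G s)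
    (hsum : ∑ s : S, d s * G s ≤ ε ^ 2) (hε : 0 ≤ ε) :
    ∑ s : S, d s * Real.sqrt (G s) ≤ ε := by
  have key : ∑ s : S, d s * Real.sqrt (G s)
      = ∑ s : S, Real.sqrt (d s) * Real.sqrt (d s * G s) := by
    refine Finset.sum_congr rfl fun s _ => ?_
    rw [Real.sqrt_mul (hd0 s), ← mul_assoc, Real.mul_self_sqrt (hd0 s)]
  rw [key]
  calc ∑ s : S, Real.sqrt (d s) * Real.sqrt (d s * G s)
      ≤ Real.sqrt (∑ s : S, d s) * Real.sqrt (∑ s : S, d s * G s) :=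
        Real.sum_sqrt_mul_sqrt_le _ hd0 (fun s => mul_nonneg (hd0 s) (hG0 s))
    _ = Real.sqrt (∑ s : S, d s * G s) := by rw [hd1, Real.sqrt_one, one_mul]
    _ ≤ Real.sqrt (ε ^ 2) := Real.sqrt_le_sqrt hsum
    _ = ε := by rw [Real.sqrt_sq hε]

end Helpers
/-- FOOBAR guarantee under an imperfect forward run: if `πb` is greedy with respect to the
estimated value functions `f`, the value-estimation error of `f` under the forward policy's
occupancy is at most `εb²`, and the forward policy's occupancy covers a comparator policy
`πcomp` with constant `C`, then `V^{πcomp} − V^{πb} ≤ 2·C·H·εb`. -/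
theorem foobar_imperfect_forward
    {S A : Type*} [Fintype S] [Fintype A] [Nonempty S] [Nonempty A] [DecidableEq A]
    (H : ℕ) (hH : 1 ≤ H)
    (P0 : S → ℝ) (hP0 : ∀ s, 0 ≤ P0 s) (hP0sum : ∑ s : S, P0 s = 1)
    (Ptr : ℕ → S → A → S → ℝ)
    (hPtr0 : ∀ h ∈ Finset.Icc 1 H, ∀ s a s', 0 ≤ Ptr h s a s')
    (hPtr1 : ∀ h ∈ Finset.Icc 1 H, ∀ s a, ∑ s' : S, Ptr h s a s' = 1)
    (R : ℕ → S → A → ℝ) (hR : ∀ h ∈ Finset.Icc 1 H, ∀ s a, R h s a ∈ Set.Icc (0 : ℝ) 1)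
    -- the forward policy `πf` and comparator policy `πcomp`
    (πf πcomp : ℕ → S → A → ℝ)
    (hπf0 : ∀ h ∈ Finset.Icc 1 H, ∀ s a, 0 ≤ πf h s a)
    (hπf1 : ∀ h ∈ Finset.Icc 1 H, ∀ s, ∑ a : A, πf h s a = 1)
    (hπc0 : ∀ h ∈ Finset.Icc 1 H, ∀ s a, 0 ≤ πcomp h s a)
    (hπc1 : ∀ h ∈ Finset.Icc 1 H, ∀ s, ∑ a : A, πcomp h s a = 1)
    -- estimated value functions and the greedy deterministic backward policy
    (f : ℕ → S → A → ℝ) (πb : ℕ → S → A)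
    (hgreedy : ∀ h ∈ Finset.Icc 1 H, ∀ s, f h s (πb h s) = maxA (fun a => f h s a))
    (εb C : ℝ) (hεb : 0 ≤ εb) (hC : 0 ≤ C)
    -- (i) value-estimation error
    (hval : ∀ h ∈ Finset.Icc 1 H,
      ∑ s : S, docc P0 Ptr πf h s *
        maxA (fun a => (f h s a - Qval H Ptr R (detPol πb) h s a) ^ 2) ≤ εb ^ 2)
    -- (ii) coverage of the comparator policy by the forward policy
    (hcov : ∀ h ∈ Finset.Icc 1 H, ∀ s, docc P0 Ptr πcomp h s ≤ C * docc P0 Ptr πf h s) :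
    Vtot H P0 Ptr R πcomp - Vtot H P0 Ptr R (detPol πb) ≤ 2 * C * H * εb := by
  -- notation
  set μ := detPol πb with hμ
  -- per-step advantage bound
  have stepA : ∀ h ∈ Finset.Icc 1 H,
      ∑ s : S, docc P0 Ptr πcomp h s *
        ((∑ a : A, πcomp h s a * Qval H Ptr R μ h s a) - Vval H Ptr R μ h s)
        ≤ 2 * C * εb := by
    intro h hmem
    obtain ⟨h1, h2⟩ := Finset.mem_Icc.mp hmem
    set G : S → ℝ := fun s => maxA (fun a => (f h s a - Qval H Ptr R μ h s a) ^ 2) with hGdef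
    have hG0 : ∀ s, 0 ≤ G s := fun s => maxA_nonneg_sq _
    have hVb : ∀ s, Vval H Ptr R μ h s = Qval H Ptr R μ h s (πb h s) := by
      intro s
      rw [Vval_bellman H Ptr R μ h h2 s]
      simp [hμ, detPol, ite_mul, one_mul, zero_mul]
    have hadv : ∀ s : S,
        (∑ a : A, πcomp h s a * Qval H Ptr R μ h s a) - Vval H Ptr R μ h s
          ≤ 2 * Real.sqrt (G s) := by
      intro s
      have hmax : ∑ a : A, πcomp h s a * Qval H Ptr R μ h s a
          ≤ maxA (fun a => Qval H Ptr R μ h s a) :=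
        convex_le_maxA _ _ (hπc0 h hmem s) (hπc1 h hmem s)
      have hgap := greedy_gap (f h s) (fun a => Qval H Ptr R μ h s a) (πb h s)
        (hgreedy h hmem s)
      rw [hVb s]
      have := le_trans hmax hgap
      linarith [this]
    have hdc0 := (docc_prop H P0 hP0 hP0sum Ptr hPtr0 hPtr1 πcomp hπc0 hπc1 h h1
      (by omega)).1
    obtain ⟨hdf0, hdf1⟩ := docc_prop H P0 hP0 hP0sum Ptr hPtr0 hPtr1 πf hπf0 hπf1 h h1
      (by omega)
    calc ∑ s : S, docc P0 Ptr πcomp h s *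
          ((∑ a : A, πcomp h s a * Qval H Ptr R μ h s a) - Vval H Ptr R μ h s)
        ≤ ∑ s : S, docc P0 Ptr πcomp h s * (2 * Real.sqrt (G s)) :=
          Finset.sum_le_sum fun s _ =>
            mul_le_mul_of_nonneg_left (hadv s) (hdc0 s)
      _ ≤ ∑ s : S, (C * docc P0 Ptr πf h s) * (2 * Real.sqrt (G s)) :=
          Finset.sum_le_sum fun s _ =>
            mul_le_mul_of_nonneg_right (hcov h hmem s)
              (by positivity)
      _ = (2 * C) * ∑ s : S, docc P0 Ptr πf h s * Real.sqrt (G s) := by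
          rw [Finset.mul_sum]
          exact Finset.sum_congr rfl fun s _ => by ring
      _ ≤ (2 * C) * εb := by
          refine mul_le_mul_of_nonneg_left ?_ (by positivity)
          exact cs_bound _ _ _ hdf0 hdf1 hG0 (hval h hmem) hεb
      _ = 2 * C * εb := by ring
  -- performance difference lemma via telescoping
  set F : ℕ → ℝ := fun i => ∑ s : S, docc P0 Ptr πcomp (i+1) s *
    (Vval H Ptr R πcomp (i+1) s - Vval H Ptr R μ (i+1) s) with hF
  have tele : ∑ i ∈ Finset.range H, (F i - F (i+1)) = F 0 - F H :=
    Finset.sum_range_sub' F H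
  have hFH : F H = 0 := by
    simp [hF, Vval_top]
  have hF0 : F 0 = Vtot H P0 Ptr R πcomp - Vtot H P0 Ptr R μ := by
    have hd1 : docc P0 Ptr πcomp 1 = P0 := rfl
    simp only [hF, Nat.zero_add, hd1, Vtot, mul_sub, Finset.sum_sub_distrib]
  have hstep : ∀ i ∈ Finset.range H, F i - F (i+1) =
      ∑ s : S, docc P0 Ptr πcomp (i+1) s *
        ((∑ a : A, πcomp (i+1) s a * Qval H Ptr R μ (i+1) s a) -
          Vval H Ptr R μ (i+1) s) := by
    intro i hi
    exact pdl_step H P0 Ptr R πcomp μ (i+1) (by omega)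
      (by simpa using Finset.mem_range.mp hi)
  have hPDL : Vtot H P0 Ptr R πcomp - Vtot H P0 Ptr R μ =
      ∑ i ∈ Finset.range H, ∑ s : S, docc P0 Ptr πcomp (i+1) s *
        ((∑ a : A, πcomp (i+1) s a * Qval H Ptr R μ (i+1) s a) -
          Vval H Ptr R μ (i+1) s) := by
    rw [← Finset.sum_congr rfl hstep, tele, hFH, hF0, sub_zero]
  rw [hPDL]
  calc ∑ i ∈ Finset.range H, ∑ s : S, docc P0 Ptr πcomp (i+1) s *
        ((∑ a : A, πcomp (i+1) s a * Qval H Ptr R μ (i+1) s a) -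
          Vval H Ptr R μ (i+1) s)
      ≤ ∑ i ∈ Finset.range H, 2 * C * εb := by
        refine Finset.sum_le_sum fun i hi => stepA (i+1) ?_
        simp only [Finset.mem_Icc]
        have := Finset.mem_range.mp hi
        omega
    _ = H * (2 * C * εb) := by
        rw [Finset.sum_const, Finset.card_range, nsmul_eq_mul]
    _ = 2 * C * H * εb := by ring
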